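/- arXiv:1711.06570 — 6 statements merged into one kernel-verified Lean document; each statement's English description precedes it below -/
import Mathlib

section
/- For every choice of initial data u₀, v₀ ∈ ℝⁿ there exists a unique twice continuously differentiable function x : [0,+∞) → ℝⁿ such that ẍ(t) + γẋ(t) + x(t) = prox_{λf}(x(t) − λ∇g(x(t))) for all t ∈ [0,+∞), x(0) = u₀ and ẋ(0) = v₀. -/
/-!
With `T = prox_{λf} ∘ (id - λ∇g)` the equation is the first-order system
`(x, ẋ)' = (ẋ, T x - γ ẋ - x)`, whose right-hand side is globally Lipschitz as soon as `T` is: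
`∇g` is `β`-Lipschitz, and `prox_{λf}` is Lipschitz because comparing `prox z` with its midpoint
towards any `y` and using convexity gives `‖prox z₁ - prox z₂‖² ≤ 2 ⟪prox z₁ - prox z₂, z₁ - z₂⟫`.
For a globally Lipschitz field, Picard–Lindelöf yields solutions on intervals whose length depends
only on the Lipschitz constant; concatenating them gives a solution on `[0, ∞)`, and Gronwall's
inequality gives uniqueness.
-/

open Set Filter Topology MeasureTheory

noncomputable def Lone (γ lam β : ℝ) : ℝ :=
  Real.sqrt (max ((γ + 1)^2) ((γ + 2) * ((1 + lam * β)^2 + 1)))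

noncomputable def Ltwo (γ lam β : ℝ) : ℝ :=
  Real.sqrt (max ((γ + 1)^2 + γ * lam * β) ((2 + lam * β)^2 + γ * (2 + lam * β)))

noncomputable def LL (γ lam β : ℝ) : ℝ := min (Lone γ lam β) (Ltwo γ lam β)

noncomputable def AA (γ lam β : ℝ) : ℝ :=
  -(γ / (2 * lam)) + (β / 2) * ((LL γ lam β)^2 + 2 * γ^2 + 1)

noncomputable def BB (γ lam β : ℝ) : ℝ :=
  -(γ / (2 * lam * (LL γ lam β)^2)) + (β / 2) * ((LL γ lam β)^2 + γ^2 + 1)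

noncomputable def CC (γ lam β : ℝ) : ℝ :=
  -((2 * (LL γ lam β)^2 + 1) / ((LL γ lam β)^2 + 1)^2) * γ^2 + 3 * β * γ * lam - 1

/-- The convex subdifferential of `f` at `x`. -/
def subdiff {n : ℕ} (f : EuclideanSpace ℝ (Fin n) → EReal)
    (x : EuclideanSpace ℝ (Fin n)) : Set (EuclideanSpace ℝ (Fin n)) :=
  {v | ∀ y, f x + ((inner ℝ v (y - x) : ℝ) : EReal) ≤ f y}

/-- The regularized function `H(u,v,w) = (f+g)(u) + (1/(2λ))‖u-v‖² - (C/(2λ))‖w‖²`. -/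
noncomputable def Hfun {n : ℕ} (f : EuclideanSpace ℝ (Fin n) → EReal)
    (g : EuclideanSpace ℝ (Fin n) → ℝ) (lam Cv : ℝ)
    (p : EuclideanSpace ℝ (Fin n) × EuclideanSpace ℝ (Fin n) × EuclideanSpace ℝ (Fin n)) : EReal :=
  f p.1 + ((g p.1 + (1/(2*lam)) * ‖p.1 - p.2.1‖^2 - (Cv/(2*lam)) * ‖p.2.2‖^2 : ℝ) : EReal)

/-- The Euclidean norm on the product `ℝⁿ × ℝⁿ × ℝⁿ`. -/
noncomputable def e3 {n : ℕ}
    (p : EuclideanSpace ℝ (Fin n) × EuclideanSpace ℝ (Fin n) × EuclideanSpace ℝ (Fin n)) : ℝ :=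
  Real.sqrt (‖p.1‖^2 + ‖p.2.1‖^2 + ‖p.2.2‖^2)

/-- The (limiting) subdifferential of `H` at `(u,v,w)`. -/
def Sset {n : ℕ} (f : EuclideanSpace ℝ (Fin n) → EReal)
    (g' : EuclideanSpace ℝ (Fin n) → EuclideanSpace ℝ (Fin n)) (lam Cv : ℝ)
    (u v w : EuclideanSpace ℝ (Fin n)) :
    Set (EuclideanSpace ℝ (Fin n) × EuclideanSpace ℝ (Fin n) × EuclideanSpace ℝ (Fin n)) :=
  {q | ∃ p ∈ subdiff f u,
    q = (p + g' u + (1/lam) • (u - v), -((1/lam) • (u - v)), -((Cv/lam) • w))}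

/-- A C² solution of the dynamical system (2) on `[0,∞)` with initial data `u₀, v₀`. -/
def IsSol {n : ℕ} (prox g' : EuclideanSpace ℝ (Fin n) → EuclideanSpace ℝ (Fin n))
    (γ lam : ℝ) (u₀ v₀ : EuclideanSpace ℝ (Fin n))
    (x x' x'' : ℝ → EuclideanSpace ℝ (Fin n)) : Prop :=
  (∀ t ∈ Ici (0:ℝ), HasDerivWithinAt x (x' t) (Ici 0) t) ∧
  (∀ t ∈ Ici (0:ℝ), HasDerivWithinAt x' (x'' t) (Ici 0) t) ∧
  ContinuousOn x'' (Ici 0) ∧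
  (∀ t ∈ Ici (0:ℝ), x'' t + γ • x' t + x t = prox (x t - lam • g' (x t))) ∧
  x 0 = u₀ ∧ x' 0 = v₀

open scoped NNReal

section IntegralCurve

variable {E : Type*} [NormedAddCommGroup E] [NormedSpace ℝ E]
  {v : ℝ → E → E} {X Y : ℝ → E} {s u : Set ℝ}

lemma IsIntegralCurveOn.congr (h : IsIntegralCurveOn X v s) (hYX : EqOn Y X s) :
    IsIntegralCurveOn Y v s := by
  intro t ht
  rw [hYX ht]
  exact (h t ht).congr hYX (hYX ht)

-- Off a closed set the derivative within it is vacuous, so the two pieces can be united.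
lemma IsIntegralCurveOn.union_of_isClosed (hs : IsClosed s) (hu : IsClosed u)
    (hXs : IsIntegralCurveOn X v s) (hXu : IsIntegralCurveOn X v u) :
    IsIntegralCurveOn X v (s ∪ u) := by
  have hderiv {w : Set ℝ} (hw : IsClosed w)
      (hX : IsIntegralCurveOn X v w) (t : ℝ) : HasDerivWithinAt X (v t (X t)) w t := by
    by_cases ht : t ∈ w
    · exact hX t ht
    · exact HasFDerivWithinAt.of_notMem_closure (by rwa [hw.closure_eq])
  exact fun t _ ↦ (hderiv hs hXs t).union (hderiv hu hXu t)

variable {V : E → E} {K : ℝ≥0}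

lemma IsIntegralCurveOn.eqOn_Icc_of_lipschitzWith (hV : LipschitzWith K V) {a b : ℝ}
    (hX : IsIntegralCurveOn X (fun _ ↦ V) (Icc a b))
    (hY : IsIntegralCurveOn Y (fun _ ↦ V) (Icc a b)) (ha : X a = Y a) :
    EqOn X Y (Icc a b) :=
  ODE_solution_unique (fun _ ↦ hV) hX.continuousOn
    (fun t ht ↦ (hX t (Ico_subset_Icc_self ht)).mono_of_mem_nhdsWithin (Icc_mem_nhdsGE_of_mem ht))
    hY.continuousOn
    (fun t ht ↦ (hY t (Ico_subset_Icc_self ht)).mono_of_mem_nhdsWithin (Icc_mem_nhdsGE_of_mem ht))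
    ha

lemma IsIntegralCurveOn.eqOn_Ici_of_lipschitzWith (hV : LipschitzWith K V) {a : ℝ}
    (hX : IsIntegralCurveOn X (fun _ ↦ V) (Ici a))
    (hY : IsIntegralCurveOn Y (fun _ ↦ V) (Ici a)) (ha : X a = Y a) :
    EqOn X Y (Ici a) := fun _ ht ↦
  (hX.mono Icc_subset_Ici_self).eqOn_Icc_of_lipschitzWith hV (hY.mono Icc_subset_Ici_self) ha
    (right_mem_Icc.2 ht)

variable [CompleteSpace E]

-- Picard–Lindelöf on the ball of radius `2h‖V x‖`, where `‖V‖ ≤ ‖V x‖ + K · 2h‖V x‖`.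
lemma LipschitzWith.exists_isIntegralCurveOn_Icc_add (hV : LipschitzWith K V) {h : ℝ≥0}
    (hKh : (K : ℝ) * h ≤ 1 / 2) (a : ℝ) (x : E) :
    ∃ X : ℝ → E, X a = x ∧ IsIntegralCurveOn X (fun _ ↦ V) (Icc a (a + h)) := by
  set R : ℝ≥0 := 2 * h * ‖V x‖₊
  have hbound : ∀ y ∈ Metric.closedBall x R, ‖V y‖ ≤ (‖V x‖₊ + K * R : ℝ≥0) := by
    intro y hy
    have hVy : ‖V y - V x‖ ≤ K * ‖y - x‖ := hV.norm_sub_le y x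
    have hyx : (K : ℝ) * ‖y - x‖ ≤ K * R :=
      mul_le_mul_of_nonneg_left (mem_closedBall_iff_norm.1 hy) K.coe_nonneg
    push_cast
    linarith [norm_le_norm_add_norm_sub' (V y) (V x)]
  have htime : ((‖V x‖₊ + K * R : ℝ≥0) : ℝ) * max (a + h - a) (a - a) ≤ R - (0 : ℝ≥0) := by
    have hmax : max (a + h - a) (a - a) = h := by simp
    have hKhR : (K : ℝ) * h * (2 * h * ‖V x‖) ≤ 1 / 2 * (2 * h * ‖V x‖) :=
      mul_le_mul_of_nonneg_right hKh (by positivity)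
    simp only [hmax, R]
    push_cast
    linarith
  exact (IsPicardLindelof.of_time_independent (t₀ := ⟨a, le_rfl, by simp⟩) hbound
    hV.lipschitzOnWith htime).exists_eq_forall_mem_Icc_hasDerivWithinAt₀

-- Solutions of length `h` are concatenated; `h` depends only on `K`.
lemma LipschitzWith.exists_isIntegralCurveOn_Icc (hV : LipschitzWith K V) (x : E) (T : ℝ) :
    ∃ X : ℝ → E, X 0 = x ∧ IsIntegralCurveOn X (fun _ ↦ V) (Icc 0 T) := by
  set h : ℝ≥0 := (2 * (K + 1))⁻¹
  have hh : (0 : ℝ) < h := by positivity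
  have hKh : (K : ℝ) * h ≤ 1 / 2 := by
    simp only [h, NNReal.coe_inv, NNReal.coe_mul, NNReal.coe_add, NNReal.coe_one, NNReal.coe_ofNat]
    rw [← div_eq_mul_inv, div_le_iff₀ (by positivity)]
    linarith
  have hsteps : ∀ k : ℕ, ∃ X : ℝ → E, X 0 = x ∧
      IsIntegralCurveOn X (fun _ ↦ V) (Icc 0 ((k + 1) * h)) := by
    intro k
    induction k with
    | zero => simpa using hV.exists_isIntegralCurveOn_Icc_add hKh 0 x
    | succ k ih =>
      obtain ⟨X, hX0, hX⟩ := ih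
      set a : ℝ := (k + 1) * h
      have ha : 0 ≤ a := by positivity
      obtain ⟨Y, hYa, hY⟩ := hV.exists_isIntegralCurveOn_Icc_add hKh a (X a)
      set Z := (Iic a).piecewise X Y
      have hZX : EqOn Z X (Icc 0 a) := fun t ht ↦ piecewise_eq_of_mem _ _ _ ht.2
      have hZY : EqOn Z Y (Icc a (a + h)) := by
        intro t ht
        rcases ht.1.eq_or_lt with rfl | hat
        · rw [hZX ⟨ha, le_rfl⟩, hYa]
        · exact piecewise_eq_of_notMem _ _ _ (not_le.2 hat)
      refine ⟨Z, (hZX ⟨le_rfl, ha⟩).trans hX0, ?_⟩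
      have hZ := (hX.congr hZX).union_of_isClosed isClosed_Icc isClosed_Icc (hY.congr hZY)
      rwa [Icc_union_Icc_eq_Icc ha (by linarith), show a + h = ((k + 1 : ℕ) + 1) * h by
        push_cast; ring] at hZ
  obtain ⟨k, hk⟩ := exists_nat_ge (T / h)
  obtain ⟨X, hX0, hX⟩ := hsteps k
  refine ⟨X, hX0, hX.mono (Icc_subset_Icc_right ?_)⟩
  rw [div_le_iff₀ hh] at hk
  nlinarith

theorem LipschitzWith.exists_isIntegralCurveOn_Ici (hV : LipschitzWith K V) (x : E) :
    ∃ X : ℝ → E, X 0 = x ∧ IsIntegralCurveOn X (fun _ ↦ V) (Ici 0) := by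
  choose S hS0 hS using hV.exists_isIntegralCurveOn_Icc x
  refine ⟨fun t ↦ S (t + 1) t, hS0 _, fun t ht ↦ ?_⟩
  have hagree : EqOn (fun s ↦ S (s + 1) s) (S (t + 1)) (Icc 0 (t + 1)) := by
    intro s hs
    have hmin : s ∈ Icc 0 (min (s + 1) (t + 1)) := ⟨hs.1, le_min (by linarith) hs.2⟩
    exact ((hS _).mono (Icc_subset_Icc_right (min_le_left _ _))).eqOn_Icc_of_lipschitzWith hV
      ((hS _).mono (Icc_subset_Icc_right (min_le_right _ _))) ((hS0 _).trans (hS0 _).symm) hmin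
  have hnhds : Icc 0 (t + 1) ∈ 𝓝[Ici 0] t :=
    Ici_inter_Iic (a := (0 : ℝ)) ▸ inter_mem_nhdsWithin _ (Iic_mem_nhds (by linarith))
  exact ((hS (t + 1)).congr hagree t ⟨ht, by linarith⟩).mono_of_mem_nhdsWithin hnhds

end IntegralCurve

section Prox

variable {E : Type*} [NormedAddCommGroup E]

def IsProx (f : E → EReal) (lam : ℝ) (prox : E → E) : Prop :=
  ∀ z y, f (prox z) + (((1 / (2 * lam)) * ‖prox z - z‖ ^ 2 : ℝ) : EReal)
    ≤ f y + (((1 / (2 * lam)) * ‖y - z‖ ^ 2 : ℝ) : EReal)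

variable {f : E → EReal} {lam : ℝ} {prox : E → E}

lemma IsProx.exists_eq_coe (hprox : IsProx f lam prox) (htop : ∃ z, f z ≠ ⊤)
    (hbot : ∀ z, f z ≠ ⊥) (z : E) : ∃ a : ℝ, f (prox z) = a := by
  obtain ⟨w, hw⟩ := htop
  refine ⟨(f (prox z)).toReal, (EReal.coe_toReal ?_ (hbot _)).symm⟩
  intro hz
  have hmin := hprox z w
  rw [hz, EReal.top_add_of_ne_bot (EReal.coe_ne_bot _), top_le_iff,
    ← EReal.coe_toReal hw (hbot w), ← EReal.coe_add] at hmin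
  exact EReal.coe_ne_top _ hmin

variable [InnerProductSpace ℝ E]

lemma norm_half_smul_add_half_smul_sub_sq (p y z : E) :
    ‖(1 / 2 : ℝ) • p + (1 / 2 : ℝ) • y - z‖ ^ 2
      = 1 / 2 * ‖p - z‖ ^ 2 + 1 / 2 * ‖y - z‖ ^ 2 - 1 / 4 * ‖p - y‖ ^ 2 := by
  have hsplit : (1 / 2 : ℝ) • p + (1 / 2 : ℝ) • y - z = (1 / 2 : ℝ) • ((p - z) + (y - z)) := by
    module
  have hpar := parallelogram_law_with_norm ℝ (p - z) (y - z)
  rw [sub_sub_sub_cancel_right] at hpar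
  rw [hsplit, norm_smul, Real.norm_eq_abs, abs_of_pos one_half_pos]
  linear_combination (1 / 4 : ℝ) * hpar

lemma norm_sub_sq_add_norm_sub_sq_sub (p₁ p₂ z₁ z₂ : E) :
    ‖p₂ - z₁‖ ^ 2 + ‖p₁ - z₂‖ ^ 2 - ‖p₁ - z₁‖ ^ 2 - ‖p₂ - z₂‖ ^ 2
      = 2 * inner ℝ (p₁ - p₂) (z₁ - z₂) := by
  simp only [norm_sub_sq_real, inner_sub_left, inner_sub_right]
  ring

-- Compare `prox z` with the midpoint of `prox z` and `y`: convexity gains the `‖prox z - y‖²` term.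
lemma IsProx.add_norm_sq_le (hprox : IsProx f lam prox)
    (hconv : ∀ x y : E, ∀ t : ℝ, 0 ≤ t → t ≤ 1 →
      f (t • x + (1 - t) • y) ≤ (t : EReal) * f x + ((1 - t : ℝ) : EReal) * f y)
    {z y : E} {a b : ℝ} (ha : f (prox z) = a) (hb : f y = b) :
    a + 1 / (2 * lam) * ‖prox z - z‖ ^ 2 + 1 / (4 * lam) * ‖prox z - y‖ ^ 2
      ≤ b + 1 / (2 * lam) * ‖y - z‖ ^ 2 := by
  set m : E := (1 / 2 : ℝ) • prox z + (1 / 2 : ℝ) • y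
  have hfm : f m ≤ ((a / 2 + b / 2 : ℝ) : EReal) := by
    have h := hconv (prox z) y (1 / 2) (by norm_num) (by norm_num)
    rw [show (1 - 1 / 2 : ℝ) = 1 / 2 by norm_num, ha, hb] at h
    refine h.trans_eq ?_
    rw [← EReal.coe_mul, ← EReal.coe_mul, ← EReal.coe_add]
    ring_nf
  have hmin : a + 1 / (2 * lam) * ‖prox z - z‖ ^ 2
      ≤ a / 2 + b / 2 + 1 / (2 * lam) * ‖m - z‖ ^ 2 := by
    have h := (hprox z m).trans (add_le_add_left hfm _)
    rw [ha, ← EReal.coe_add, ← EReal.coe_add] at h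
    exact_mod_cast h
  rw [norm_half_smul_add_half_smul_sub_sq] at hmin
  have hquarter : 1 / (4 * lam) = 1 / (2 * lam) / 2 := by ring
  rw [hquarter]
  nlinarith

-- Adding the two inequalities of `add_norm_sq_le` gives `‖p₁ - p₂‖² ≤ 2 ⟪p₁ - p₂, z₁ - z₂⟫`.
theorem IsProx.lipschitzWith (hprox : IsProx f lam prox) (hlam : 0 < lam)
    (htop : ∃ z, f z ≠ ⊤) (hbot : ∀ z, f z ≠ ⊥)
    (hconv : ∀ x y : E, ∀ t : ℝ, 0 ≤ t → t ≤ 1 →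
      f (t • x + (1 - t) • y) ≤ (t : EReal) * f x + ((1 - t : ℝ) : EReal) * f y) :
    LipschitzWith 2 prox := by
  refine LipschitzWith.of_dist_le_mul fun z₁ z₂ ↦ ?_
  obtain ⟨a, ha⟩ := hprox.exists_eq_coe htop hbot z₁
  obtain ⟨b, hb⟩ := hprox.exists_eq_coe htop hbot z₂
  have h₁ := hprox.add_norm_sq_le hconv ha hb
  have h₂ := hprox.add_norm_sq_le hconv hb ha
  rw [norm_sub_rev (prox z₂) (prox z₁)] at h₂
  have hsum : ‖prox z₁ - prox z₂‖ ^ 2 ≤ 2 * inner ℝ (prox z₁ - prox z₂) (z₁ - z₂) := by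
    rw [← norm_sub_sq_add_norm_sub_sq_sub]
    have hquarter : 1 / (4 * lam) = 1 / (2 * lam) / 2 := by ring
    rw [hquarter] at h₁ h₂
    refine le_of_mul_le_mul_left ?_ (by positivity : 0 < 1 / (2 * lam))
    linarith
  have hcs := real_inner_le_norm (prox z₁ - prox z₂) (z₁ - z₂)
  rw [dist_eq_norm, dist_eq_norm, NNReal.coe_ofNat]
  nlinarith [norm_nonneg (prox z₁ - prox z₂), norm_nonneg (z₁ - z₂)]

end Prox

section DampedOscillator

variable {E : Type*} [NormedAddCommGroup E] [NormedSpace ℝ E]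

/-- The first-order system `(x, ẋ)' = (ẋ, T x - γ ẋ - x)` of `ẍ + γ ẋ + x = T x`. -/
def dampedField (T : E → E) (γ : ℝ) (p : E × E) : E × E :=
  (p.2, T p.1 - γ • p.2 - p.1)

lemma LipschitzWith.dampedField {T : E → E} {K : ℝ≥0} (hT : LipschitzWith K T) (γ : ℝ) :
    LipschitzWith (max 1 (K + ‖γ‖₊ + 1)) (dampedField T γ) := by
  have h := LipschitzWith.prod_snd.prodMk
    (((hT.comp LipschitzWith.prod_fst).sub
      ((lipschitzWith_smul γ).comp LipschitzWith.prod_snd)).sub LipschitzWith.prod_fst)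
  simp only [mul_one] at h
  exact h

end DampedOscillator

section IsSol

variable {n : ℕ} {prox g' : EuclideanSpace ℝ (Fin n) → EuclideanSpace ℝ (Fin n)} {γ lam : ℝ}
  {u₀ v₀ : EuclideanSpace ℝ (Fin n)}

lemma IsSol.isIntegralCurveOn {x x' x'' : ℝ → EuclideanSpace ℝ (Fin n)}
    (h : IsSol prox g' γ lam u₀ v₀ x x' x'') :
    IsIntegralCurveOn (fun t ↦ (x t, x' t))
      (fun _ ↦ dampedField (fun u ↦ prox (u - lam • g' u)) γ) (Ici 0) := by
  obtain ⟨hx, hx', -, hode, -, -⟩ := h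
  intro t ht
  have hx'' : x'' t = prox (x t - lam • g' (x t)) - γ • x' t - x t := by
    rw [← hode t ht]
    abel
  exact (hx t ht).prodMk (hx'' ▸ hx' t ht)

lemma IsSol.prodMk_zero {x x' x'' : ℝ → EuclideanSpace ℝ (Fin n)}
    (h : IsSol prox g' γ lam u₀ v₀ x x' x'') : (x 0, x' 0) = (u₀, v₀) := by
  rw [h.2.2.2.2.1, h.2.2.2.2.2]

lemma isSol_of_isIntegralCurveOn
    {X : ℝ → EuclideanSpace ℝ (Fin n) × EuclideanSpace ℝ (Fin n)}
    (hc : Continuous (dampedField (fun u ↦ prox (u - lam • g' u)) γ))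
    (hX : IsIntegralCurveOn X (fun _ ↦ dampedField (fun u ↦ prox (u - lam • g' u)) γ) (Ici 0))
    (hX0 : X 0 = (u₀, v₀)) :
    IsSol prox g' γ lam u₀ v₀ (fun t ↦ (X t).1) (fun t ↦ (X t).2)
      (fun t ↦ (dampedField (fun u ↦ prox (u - lam • g' u)) γ (X t)).2) := by
  refine ⟨fun t ht ↦ ?_, fun t ht ↦ ?_, ?_, fun t _ ↦ ?_,
    congrArg Prod.fst hX0, congrArg Prod.snd hX0⟩
  · exact hasFDerivAt_fst.comp_hasDerivWithinAt t (hX t ht)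
  · exact hasFDerivAt_snd.comp_hasDerivWithinAt t (hX t ht)
  · exact continuous_snd.comp_continuousOn (hc.comp_continuousOn hX.continuousOn)
  · simp only [dampedField]
    abel

end IsSol

theorem stmt_0_general (n : ℕ) (β lam γ : ℝ)
    (hlam : 0 < lam)
    (f : EuclideanSpace ℝ (Fin n) → EReal)
    (hproper : (∃ z, f z ≠ ⊤) ∧ (∀ z, f z ≠ ⊥))
    (hconv : ∀ x y : EuclideanSpace ℝ (Fin n), ∀ t : ℝ, 0 ≤ t → t ≤ 1 →
      f (t • x + (1 - t) • y) ≤ (t : EReal) * f x + ((1 - t : ℝ) : EReal) * f y)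
    (g' : EuclideanSpace ℝ (Fin n) → EuclideanSpace ℝ (Fin n))
    (hglip : ∀ u v, ‖g' u - g' v‖ ≤ β * ‖u - v‖)
    (prox : EuclideanSpace ℝ (Fin n) → EuclideanSpace ℝ (Fin n))
    (hprox : ∀ z y, f (prox z) + (((1/(2*lam)) * ‖prox z - z‖^2 : ℝ) : EReal)
      ≤ f y + (((1/(2*lam)) * ‖y - z‖^2 : ℝ) : EReal))
    (u₀ v₀ : EuclideanSpace ℝ (Fin n)) :
    (∃ x x' x'' : ℝ → EuclideanSpace ℝ (Fin n), IsSol prox g' γ lam u₀ v₀ x x' x'') ∧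
    (∀ x x' x'' y y' y'' : ℝ → EuclideanSpace ℝ (Fin n),
      IsSol prox g' γ lam u₀ v₀ x x' x'' → IsSol prox g' γ lam u₀ v₀ y y' y'' →
      EqOn x y (Ici 0)) := by
  have hg' : LipschitzWith β.toNNReal g' := LipschitzWith.of_dist_le' fun u v ↦ by
    simpa only [dist_eq_norm] using hglip u v
  have hforward : LipschitzWith (1 + ‖lam‖₊ * β.toNNReal) fun u ↦ u - lam • g' u :=
    LipschitzWith.id.sub ((lipschitzWith_smul lam).comp hg')
  have hV := (((show IsProx f lam prox from hprox).lipschitzWith hlam hproper.1 hproper.2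
    hconv).comp hforward).dampedField γ
  refine ⟨?_, fun x x' x'' y y' y'' hx hy t ht ↦ ?_⟩
  · obtain ⟨X, hX0, hX⟩ := hV.exists_isIntegralCurveOn_Ici (u₀, v₀)
    exact ⟨_, _, _, isSol_of_isIntegralCurveOn hV.continuous hX hX0⟩
  · exact congrArg Prod.fst (hx.isIntegralCurveOn.eqOn_Ici_of_lipschitzWith hV
      hy.isIntegralCurveOn (hx.prodMk_zero.trans hy.prodMk_zero.symm) ht)

theorem stmt_0 (n : ℕ) (hn : 1 ≤ n) (β lam γ : ℝ)
    (hβ : 0 ≤ β) (hlam : 0 < lam) (hγ : 0 < γ)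
    (f : EuclideanSpace ℝ (Fin n) → EReal)
    (hproper : (∃ z, f z ≠ ⊤) ∧ (∀ z, f z ≠ ⊥))
    (hconv : ∀ x y : EuclideanSpace ℝ (Fin n), ∀ t : ℝ, 0 ≤ t → t ≤ 1 →
      f (t • x + (1 - t) • y) ≤ (t : EReal) * f x + ((1 - t : ℝ) : EReal) * f y)
    (hlsc : LowerSemicontinuous f)
    (g : EuclideanSpace ℝ (Fin n) → ℝ)
    (g' : EuclideanSpace ℝ (Fin n) → EuclideanSpace ℝ (Fin n))
    (hg : ∀ u, HasGradientAt g (g' u) u)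
    (hglip : ∀ u v, ‖g' u - g' v‖ ≤ β * ‖u - v‖)
    (prox : EuclideanSpace ℝ (Fin n) → EuclideanSpace ℝ (Fin n))
    (hprox : ∀ z y, f (prox z) + (((1/(2*lam)) * ‖prox z - z‖^2 : ℝ) : EReal)
      ≤ f y + (((1/(2*lam)) * ‖y - z‖^2 : ℝ) : EReal))
    (hproxu : ∀ z y, (∀ w, f y + (((1/(2*lam)) * ‖y - z‖^2 : ℝ) : EReal)
      ≤ f w + (((1/(2*lam)) * ‖w - z‖^2 : ℝ) : EReal)) → y = prox z)
    (u₀ v₀ : EuclideanSpace ℝ (Fin n)) :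
    (∃ x x' x'' : ℝ → EuclideanSpace ℝ (Fin n), IsSol prox g' γ lam u₀ v₀ x x' x'') ∧
    (∀ x x' x'' y y' y'' : ℝ → EuclideanSpace ℝ (Fin n),
      IsSol prox g' γ lam u₀ v₀ x x' x'' → IsSol prox g' γ lam u₀ v₀ y y' y'' →
      EqOn x y (Ici 0)) :=
  stmt_0_general n β lam γ hlam f hproper hconv g' hglip prox hprox u₀ v₀
end

section
/- The map F : ℝⁿ × ℝⁿ → ℝⁿ × ℝⁿ defined by F(u,v) := (v, prox_{λf}(u − λ∇g(u)) − γv − u) is globally Lipschitz continuous with Lipschitz constant L₂ := √(max{(γ+1)² + γλβ, (2+λβ)² + γ(2+λβ)}), i.e. ‖F(u,v) − F(ū,v̄)‖ ≤ L₂‖(u,v) − (ū,v̄)‖ for all (u,v), (ū,v̄) ∈ ℝⁿ × ℝⁿ. -/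
/-!
The only nonlinear ingredient of `F` is the proximal map, and it is nonexpansive: moving the
minimiser `p = prox_{λf}(z)` a small step `t` towards any `y` and letting `t → 0` gives the
variational inequality `⟪z - p, y - p⟫ ≤ λ (f y - f p)`, and adding it for two centres `z, z'`
gives `‖p - p'‖² ≤ ⟪z - z', p - p'⟫`. With the `(1 + λβ)`-Lipschitz forward step
`u ↦ u - λ∇g(u)`, the second component of `F` moves by at most `(2 + λβ)‖u - ū‖ + γ‖v - v̄‖`,
and `2ab ≤ a² + b²` turns this into the constant `L₂`.
-/

open Set Filter Topology MeasureTheory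

open scoped RealInnerProductSpace

-- Mathlib's `ConvexOn` needs an action of `ℝ` on the codomain, which `EReal` does not have.
def ConvexEReal {E : Type*} [AddCommMonoid E] [Module ℝ E] (f : E → EReal) : Prop :=
  ∀ x y : E, ∀ t : ℝ, 0 ≤ t → t ≤ 1 →
    f (t • x + (1 - t) • y) ≤ (t : EReal) * f x + ((1 - t : ℝ) : EReal) * f y

section Prox

variable {E : Type*} [NormedAddCommGroup E]

def IsProxPoint (f : E → EReal) (lam : ℝ) (z p : E) : Prop :=
  ∀ y, f p + (((1/(2*lam)) * ‖p - z‖^2 : ℝ) : EReal)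
    ≤ f y + (((1/(2*lam)) * ‖y - z‖^2 : ℝ) : EReal)

namespace IsProxPoint

variable {f : E → EReal} {lam : ℝ} {z z' p p' y : E} {rp rp' ry : ℝ}

theorem exists_eq_coe (hp : IsProxPoint f lam z p) (hy : f y ≠ ⊤) (hbot : f p ≠ ⊥) :
    ∃ r : ℝ, f p = r := by
  have htop : f p ≠ ⊤ := by
    intro hfp
    have h := hp y
    rw [hfp, EReal.top_add_coe] at h
    exact (EReal.add_lt_top hy (EReal.coe_ne_top _)).not_ge h
  exact ⟨(f p).toReal, (EReal.coe_toReal htop hbot).symm⟩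

variable [InnerProductSpace ℝ E]

theorem sub_le_inner_add_mul (hconv : ConvexEReal f) (hp : IsProxPoint f lam z p)
    (hfp : f p = rp) (hfy : f y = ry) {t : ℝ} (ht0 : 0 < t) (ht1 : t ≤ 1) :
    rp - ry ≤ (1/lam) * ⟪p - z, y - p⟫ + t * ((1/(2*lam)) * ‖y - p‖^2) := by
  set c := 1/(2*lam)
  have hmin := hp (t • y + (1 - t) • p)
  have hcvx := hconv y p t ht0.le ht1
  rw [hfp, hfy] at hcvx
  rw [hfp] at hmin
  have hreal : rp + c * ‖p - z‖^2 ≤ t * ry + (1 - t) * rp + c * ‖t • y + (1 - t) • p - z‖^2 := by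
    exact_mod_cast hmin.trans (add_le_add_left hcvx _)
  have hexpand : ‖t • y + (1 - t) • p - z‖^2
      = ‖p - z‖^2 + 2 * t * ⟪p - z, y - p⟫ + t^2 * ‖y - p‖^2 := by
    rw [show t • y + (1 - t) • p - z = (p - z) + t • (y - p) by module, norm_add_sq_real,
      real_inner_smul_right, norm_smul, Real.norm_eq_abs, abs_of_pos ht0]
    ring
  rw [hexpand] at hreal
  have hc : 1/lam = 2 * c := by simp only [c]; field_simp
  rw [hc]
  refine le_of_mul_le_mul_left ?_ ht0
  nlinarith

-- `λ⁻¹ (z - p)` is a subgradient of `f` at `p`.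
theorem inner_le (hconv : ConvexEReal f) (hlam : 0 < lam) (hp : IsProxPoint f lam z p)
    (hfp : f p = rp) (hfy : f y = ry) :
    ⟪z - p, y - p⟫ ≤ lam * (ry - rp) := by
  have hlim : Tendsto (fun t : ℝ ↦ (1/lam) * ⟪p - z, y - p⟫ + t * ((1/(2*lam)) * ‖y - p‖^2))
      (𝓝[>] 0) (𝓝 ((1/lam) * ⟪p - z, y - p⟫)) := by
    refine tendsto_nhdsWithin_of_tendsto_nhds ?_
    simpa using ((continuous_id.mul continuous_const).const_add _).tendsto (0 : ℝ)
  have hle : rp - ry ≤ (1/lam) * ⟪p - z, y - p⟫ :=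
    ge_of_tendsto hlim <| mem_of_superset (Ioc_mem_nhdsGT one_pos) fun t ht ↦
      sub_le_inner_add_mul hconv hp hfp hfy ht.1 ht.2
  rw [div_mul_eq_mul_div, one_mul, le_div_iff₀ hlam] at hle
  rw [← neg_sub p z, inner_neg_left]
  linarith

theorem norm_sub_sq_le_inner (hconv : ConvexEReal f) (hlam : 0 < lam)
    (hp : IsProxPoint f lam z p) (hp' : IsProxPoint f lam z' p') (hfp : f p = rp)
    (hfp' : f p' = rp') :
    ‖p - p'‖^2 ≤ ⟪z - z', p - p'⟫ := by
  have h := add_le_add (inner_le hconv hlam hp hfp hfp') (inner_le hconv hlam hp' hfp' hfp)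
  have hsum : ⟪z - p, p' - p⟫ + ⟪z' - p', p - p'⟫ = ‖p - p'‖^2 - ⟪z - z', p - p'⟫ := by
    simp only [inner_sub_left, inner_sub_right, real_inner_self_eq_norm_sq, real_inner_comm,
      norm_sub_sq_real]
    ring
  linarith

theorem norm_sub_le (hconv : ConvexEReal f) (hlam : 0 < lam)
    (hp : IsProxPoint f lam z p) (hp' : IsProxPoint f lam z' p') (hfp : f p = rp)
    (hfp' : f p' = rp') :
    ‖p - p'‖ ≤ ‖z - z'‖ := by
  have h := (norm_sub_sq_le_inner hconv hlam hp hp' hfp hfp').trans (real_inner_le_norm _ _)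
  nlinarith [norm_nonneg (p - p'), norm_nonneg (z - z')]

end IsProxPoint
end Prox

theorem norm_sub_smul_sub_le {E : Type*} [NormedAddCommGroup E] [NormedSpace ℝ E]
    {g' : E → E} {β lam : ℝ} (hg' : ∀ u v, ‖g' u - g' v‖ ≤ β * ‖u - v‖) (hlam : 0 ≤ lam)
    (u ub : E) :
    ‖(u - lam • g' u) - (ub - lam • g' ub)‖ ≤ (1 + lam * β) * ‖u - ub‖ :=
  calc ‖(u - lam • g' u) - (ub - lam • g' ub)‖ = ‖(u - ub) - lam • (g' u - g' ub)‖ := by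
        rw [smul_sub]; abel_nf
    _ ≤ ‖u - ub‖ + lam * ‖g' u - g' ub‖ :=
        (norm_sub_le _ _).trans_eq (by rw [norm_smul, Real.norm_of_nonneg hlam])
    _ ≤ ‖u - ub‖ + lam * (β * ‖u - ub‖) := by gcongr; exact hg' u ub
    _ = (1 + lam * β) * ‖u - ub‖ := by ring

theorem norm_sub_smul_sub_sub_le {E : Type*} [NormedAddCommGroup E] [NormedSpace ℝ E]
    {x xb u ub v vb : E} {K γ : ℝ} (hx : ‖x - xb‖ ≤ K * ‖u - ub‖) (hγ : 0 ≤ γ) :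
    ‖(x - γ • v - u) - (xb - γ • vb - ub)‖ ≤ (K + 1) * ‖u - ub‖ + γ * ‖v - vb‖ :=
  calc ‖(x - γ • v - u) - (xb - γ • vb - ub)‖ = ‖((x - xb) - γ • (v - vb)) - (u - ub)‖ := by
        rw [smul_sub]; abel_nf
    _ ≤ ‖x - xb‖ + γ * ‖v - vb‖ + ‖u - ub‖ := by
        have := norm_sub_le (x - xb) (γ • (v - vb))
        rw [norm_smul, Real.norm_of_nonneg hγ] at this
        linarith [norm_sub_le ((x - xb) - γ • (v - vb)) (u - ub)]
    _ ≤ (K + 1) * ‖u - ub‖ + γ * ‖v - vb‖ := by linarith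

theorem sqrt_sq_add_sq_le_Ltwo {γ lam β a b c : ℝ} (hγ : 0 ≤ γ) (hlamβ : 0 ≤ lam * β)
    (hc0 : 0 ≤ c) (hc : c ≤ (2 + lam * β) * a + γ * b) :
    Real.sqrt (b^2 + c^2) ≤ Ltwo γ lam β * Real.sqrt (a^2 + b^2) := by
  set M := max ((γ + 1)^2 + γ * lam * β) ((2 + lam * β)^2 + γ * (2 + lam * β))
  have hM0 : 0 ≤ M := le_trans (by nlinarith [mul_nonneg hγ hlamβ]) (le_max_left _ _)
  have hc2 : c^2 ≤ ((2 + lam * β) * a + γ * b)^2 := pow_le_pow_left₀ hc0 hc 2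
  have hkey : b^2 + c^2 ≤ M * (a^2 + b^2) := by
    have hm1 : (γ + 1)^2 + γ * lam * β ≤ M := le_max_left _ _
    have hm2 : (2 + lam * β)^2 + γ * (2 + lam * β) ≤ M := le_max_right _ _
    nlinarith [mul_nonneg (mul_nonneg hγ (by linarith : (0:ℝ) ≤ 2 + lam * β)) (sq_nonneg (a - b)),
      mul_nonneg (sub_nonneg.2 hm1) (sq_nonneg b), mul_nonneg (sub_nonneg.2 hm2) (sq_nonneg a)]
  calc Real.sqrt (b^2 + c^2) ≤ Real.sqrt (M * (a^2 + b^2)) := Real.sqrt_le_sqrt hkey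
    _ = Ltwo γ lam β * Real.sqrt (a^2 + b^2) := Real.sqrt_mul hM0 _

theorem stmt_3_general (n : ℕ) (β lam γ : ℝ)
    (hβ : 0 ≤ β) (hlam : 0 < lam) (hγ : 0 < γ)
    (f : EuclideanSpace ℝ (Fin n) → EReal)
    (hproper : (∃ z, f z ≠ ⊤) ∧ (∀ z, f z ≠ ⊥))
    (hconv : ∀ x y : EuclideanSpace ℝ (Fin n), ∀ t : ℝ, 0 ≤ t → t ≤ 1 →
      f (t • x + (1 - t) • y) ≤ (t : EReal) * f x + ((1 - t : ℝ) : EReal) * f y)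
    (g' : EuclideanSpace ℝ (Fin n) → EuclideanSpace ℝ (Fin n))
    (hglip : ∀ u v, ‖g' u - g' v‖ ≤ β * ‖u - v‖)
    (prox : EuclideanSpace ℝ (Fin n) → EuclideanSpace ℝ (Fin n))
    (hprox : ∀ z y, f (prox z) + (((1/(2*lam)) * ‖prox z - z‖^2 : ℝ) : EReal)
      ≤ f y + (((1/(2*lam)) * ‖y - z‖^2 : ℝ) : EReal))
    :
    ∀ u v ub vb : EuclideanSpace ℝ (Fin n),
      Real.sqrt (‖v - vb‖^2 +
          ‖(prox (u - lam • g' u) - γ • v - u) - (prox (ub - lam • g' ub) - γ • vb - ub)‖^2)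
        ≤ Ltwo γ lam β * Real.sqrt (‖u - ub‖^2 + ‖v - vb‖^2) := by
  obtain ⟨⟨z₀, hz₀⟩, hbot⟩ := hproper
  intro u v ub vb
  obtain ⟨r, hr⟩ := IsProxPoint.exists_eq_coe (hprox (u - lam • g' u)) hz₀ (hbot _)
  obtain ⟨rb, hrb⟩ := IsProxPoint.exists_eq_coe (hprox (ub - lam • g' ub)) hz₀ (hbot _)
  have hprox_lip : ‖prox (u - lam • g' u) - prox (ub - lam • g' ub)‖ ≤ (1 + lam * β) * ‖u - ub‖ :=
    (IsProxPoint.norm_sub_le hconv hlam (hprox _) (hprox _) hr hrb).trans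
      (norm_sub_smul_sub_le hglip hlam.le u ub)
  have hsecond := norm_sub_smul_sub_sub_le (v := v) (vb := vb) hprox_lip hγ.le
  rw [show 1 + lam * β + 1 = 2 + lam * β by ring] at hsecond
  exact sqrt_sq_add_sq_le_Ltwo hγ.le (mul_nonneg hlam.le hβ) (norm_nonneg _) hsecond

theorem stmt_3 (n : ℕ) (hn : 1 ≤ n) (β lam γ : ℝ)
    (hβ : 0 ≤ β) (hlam : 0 < lam) (hγ : 0 < γ)
    (f : EuclideanSpace ℝ (Fin n) → EReal)
    (hproper : (∃ z, f z ≠ ⊤) ∧ (∀ z, f z ≠ ⊥))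
    (hconv : ∀ x y : EuclideanSpace ℝ (Fin n), ∀ t : ℝ, 0 ≤ t → t ≤ 1 →
      f (t • x + (1 - t) • y) ≤ (t : EReal) * f x + ((1 - t : ℝ) : EReal) * f y)
    (hlsc : LowerSemicontinuous f)
    (g : EuclideanSpace ℝ (Fin n) → ℝ)
    (g' : EuclideanSpace ℝ (Fin n) → EuclideanSpace ℝ (Fin n))
    (hg : ∀ u, HasGradientAt g (g' u) u)
    (hglip : ∀ u v, ‖g' u - g' v‖ ≤ β * ‖u - v‖)
    (prox : EuclideanSpace ℝ (Fin n) → EuclideanSpace ℝ (Fin n))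
    (hprox : ∀ z y, f (prox z) + (((1/(2*lam)) * ‖prox z - z‖^2 : ℝ) : EReal)
      ≤ f y + (((1/(2*lam)) * ‖y - z‖^2 : ℝ) : EReal))
    (hproxu : ∀ z y, (∀ w, f y + (((1/(2*lam)) * ‖y - z‖^2 : ℝ) : EReal)
      ≤ f w + (((1/(2*lam)) * ‖w - z‖^2 : ℝ) : EReal)) → y = prox z)
    :
    ∀ u v ub vb : EuclideanSpace ℝ (Fin n),
      Real.sqrt (‖v - vb‖^2 +
          ‖(prox (u - lam • g' u) - γ • v - u) - (prox (ub - lam • g' ub) - γ • vb - ub)‖^2)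
        ≤ Ltwo γ lam β * Real.sqrt (‖u - ub‖^2 + ‖v - vb‖^2) :=
  stmt_3_general n β lam γ hβ hlam hγ f hproper hconv g' hglip prox hprox
end

section
/- Let γ, λ > 0 and β ≥ 0 be real numbers with γ ≤ √3. Then L₂ ≤ L₁, and moreover L₂ = √((2+λβ)² + γ(2+λβ)), where L₁ := √(max{(γ+1)², (γ+2)((1+λβ)²+1)}) and L₂ := √(max{(γ+1)² + γλβ, (2+λβ)² + γ(2+λβ)}). -/
/-!
Write `t = λβ ≥ 0`. The first entry of the maximum defining `L₂` falls short of the second by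
`t² + 4t + 3 - γ²`, which is nonnegative once `γ² ≤ 3`; the second entry of `L₂` falls short of
the second entry of `L₁` by `(γ + 1)t² + γt ≥ 0`.
-/

open Set Filter Topology MeasureTheory

theorem Ltwo_eq_sqrt {γ lam β : ℝ} (hγ : γ ^ 2 ≤ 3) (ht : 0 ≤ lam * β) :
    Ltwo γ lam β = Real.sqrt ((2 + lam * β) ^ 2 + γ * (2 + lam * β)) := by
  rw [Ltwo, max_eq_right (by rw [mul_assoc]; nlinarith)]

theorem sqrt_le_Lone {γ lam β : ℝ} (hγ : 0 ≤ γ) (ht : 0 ≤ lam * β) :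
    Real.sqrt ((2 + lam * β) ^ 2 + γ * (2 + lam * β)) ≤ Lone γ lam β :=
  Real.sqrt_le_sqrt <| le_max_of_le_right <| by nlinarith [mul_nonneg hγ ht]

theorem stmt_4 (γ lam β : ℝ) (hγ : 0 < γ) (hlam : 0 < lam) (hβ : 0 ≤ β)
    (hγ3 : γ ≤ Real.sqrt 3) :
    Ltwo γ lam β ≤ Lone γ lam β ∧
    Ltwo γ lam β = Real.sqrt ((2 + lam * β)^2 + γ * (2 + lam * β)) := by
  have ht : 0 ≤ lam * β := mul_nonneg hlam.le hβ
  have hLtwo := Ltwo_eq_sqrt ((Real.le_sqrt' hγ).1 hγ3) ht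
  exact ⟨hLtwo ▸ sqrt_le_Lone hγ.le ht, hLtwo⟩
end

section
/- Let x : [0,+∞) → ℝⁿ be the unique twice continuously differentiable global solution of the dynamical system (2). Then ẍ is locally Lipschitz continuous on [0,+∞), so the third derivative x⁽³⁾(t) exists for almost every t ∈ [0,+∞), and for almost every t ∈ [0,+∞) one has ‖x⁽³⁾(t)‖² ≤ L²‖ẋ(t)‖² + (L² − 1)‖ẍ(t)‖², where L := min{L₁, L₂}. -/
/-!
`prox_{λf}` is nonexpansive: adding the three-point inequalities of two proximal steps (the place
where convexity of `f` enters) gives firm nonexpansiveness. Hence `T u = prox_{λf}(u - λ∇g(u))` is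
`(1 + λβ)`-Lipschitz. Writing the equation as `ẍ = T ∘ x - γẋ - x`, `ẍ` is Lipschitz on compact
intervals because `x` and `ẋ` are, and Rademacher's theorem gives `x⁽³⁾` almost everywhere. There
`x⁽³⁾ + γẍ + ẋ` is the derivative of `T ∘ x`, so `‖x⁽³⁾‖ ≤ (2 + λβ)‖ẋ‖ + γ‖ẍ‖`, and squaring with
two choices of Cauchy–Schwarz weights gives the bounds with `L₁²` and `L₂²`.
-/

open Set Filter Topology MeasureTheory

open scoped NNReal

section Prox

variable {E : Type*} [NormedAddCommGroup E]

theorem prox_ne_top {f : E → EReal} {lam : ℝ} {prox : E → E}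
    (hdom : ∃ z, f z ≠ ⊤)
    (hprox : ∀ z y, f (prox z) + (((1/(2*lam)) * ‖prox z - z‖^2 : ℝ) : EReal)
      ≤ f y + (((1/(2*lam)) * ‖y - z‖^2 : ℝ) : EReal)) (a : E) :
    f (prox a) ≠ ⊤ := by
  obtain ⟨z, hz⟩ := hdom
  intro htop
  have h := (hprox a z).trans_lt (EReal.add_lt_top hz (EReal.coe_ne_top _))
  rw [htop, EReal.top_add_coe] at h
  exact lt_irrefl _ h

variable [InnerProductSpace ℝ E]

theorem norm_smul_add_one_sub_smul_sq (u v : E) (t : ℝ) :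
    ‖t • u + (1 - t) • v‖ ^ 2 = t * ‖u‖ ^ 2 + (1 - t) * ‖v‖ ^ 2 - t * (1 - t) * ‖u - v‖ ^ 2 := by
  simp only [← real_inner_self_eq_norm_sq, inner_add_left, inner_add_right, inner_sub_left,
    inner_sub_right, real_inner_smul_left, real_inner_smul_right, real_inner_comm u v]
  ring

theorem prox_three_point {f : E → EReal} {lam : ℝ} {prox : E → E}
    (hconv : ∀ x y : E, ∀ t : ℝ, 0 ≤ t → t ≤ 1 →
      f (t • x + (1 - t) • y) ≤ (t : EReal) * f x + ((1 - t : ℝ) : EReal) * f y)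
    (hprox : ∀ z y, f (prox z) + (((1/(2*lam)) * ‖prox z - z‖^2 : ℝ) : EReal)
      ≤ f y + (((1/(2*lam)) * ‖y - z‖^2 : ℝ) : EReal))
    {a q : E} {rp rq : ℝ} (hp : f (prox a) = rp) (hq : f q = rq) :
    rp + 1/(2*lam) * ‖prox a - a‖^2 + 1/(2*lam) * ‖q - prox a‖^2
      ≤ rq + 1/(2*lam) * ‖q - a‖^2 := by
  set c := 1/(2*lam)
  set p := prox a
  -- test the minimality of `p` against the points of the segment `[p, q]`, then let `t → 0`
  have hlim : Tendsto (fun t : ℝ => rp + c * ‖p - a‖^2 + c * (1 - t) * ‖q - p‖^2) (𝓝[>] 0)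
      (𝓝 (rp + c * ‖p - a‖^2 + c * ‖q - p‖^2)) :=
    ((by fun_prop : Continuous fun t : ℝ => rp + c * ‖p - a‖^2 + c * (1 - t) * ‖q - p‖^2).tendsto'
      0 _ (by simp)).mono_left nhdsWithin_le_nhds
  refine le_of_tendsto hlim ?_
  filter_upwards [Ioo_mem_nhdsGT one_pos] with t ⟨ht0, ht1⟩
  have hseg : t • q + (1 - t) • p - a = t • (q - a) + (1 - t) • (p - a) := by module
  have key : rp + c * ‖p - a‖^2
      ≤ t * rq + (1 - t) * rp + c * ‖t • (q - a) + (1 - t) • (p - a)‖^2 := by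
    have h := hprox a (t • q + (1 - t) • p)
    grw [hconv q p t ht0.le ht1.le, hp, hq, hseg] at h
    exact_mod_cast h
  rw [norm_smul_add_one_sub_smul_sq, sub_sub_sub_cancel_right] at key
  have : t * (rp + c * ‖p - a‖^2 + c * (1 - t) * ‖q - p‖^2) ≤ t * (rq + c * ‖q - a‖^2) := by
    linarith
  exact le_of_mul_le_mul_left this ht0

theorem lipschitzWith_one_prox {f : E → EReal} {lam : ℝ} {prox : E → E} (hlam : 0 < lam)
    (hdom : ∃ z, f z ≠ ⊤) (hbot : ∀ z, f z ≠ ⊥)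
    (hconv : ∀ x y : E, ∀ t : ℝ, 0 ≤ t → t ≤ 1 →
      f (t • x + (1 - t) • y) ≤ (t : EReal) * f x + ((1 - t : ℝ) : EReal) * f y)
    (hprox : ∀ z y, f (prox z) + (((1/(2*lam)) * ‖prox z - z‖^2 : ℝ) : EReal)
      ≤ f y + (((1/(2*lam)) * ‖y - z‖^2 : ℝ) : EReal)) :
    LipschitzWith 1 prox := by
  refine LipschitzWith.mk_one fun a b => ?_
  have hval : ∀ z, f (prox z) = (f (prox z)).toReal := fun z =>
    (EReal.coe_toReal (prox_ne_top hdom hprox z) (hbot _)).symm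
  set p := prox a
  set q := prox b
  have hpq := prox_three_point hconv hprox (hval a) (hval b)
  have hqp := prox_three_point hconv hprox (hval b) (hval a)
  have hc : 0 < 1 / (2 * lam) := by positivity
  have hfirm : ‖p - q‖ ^ 2 ≤ inner ℝ (p - q) (a - b) := by
    have hsum : 1 / (2 * lam) * (2 * ‖p - q‖ ^ 2) ≤
        1 / (2 * lam) * (‖q - a‖ ^ 2 - ‖p - a‖ ^ 2 + ‖p - b‖ ^ 2 - ‖q - b‖ ^ 2) := by
      rw [norm_sub_rev q p] at hpq
      linarith
    have hexp : ‖q - a‖ ^ 2 - ‖p - a‖ ^ 2 + ‖p - b‖ ^ 2 - ‖q - b‖ ^ 2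
        = 2 * inner ℝ (p - q) (a - b) := by
      simp only [norm_sub_sq_real, inner_sub_left, inner_sub_right, real_inner_comm]
      ring
    linarith [le_of_mul_le_mul_left hsum hc]
  rw [dist_eq_norm, dist_eq_norm]
  nlinarith [hfirm.trans (real_inner_le_norm (p - q) (a - b)), norm_nonneg (p - q),
    norm_nonneg (a - b)]

end Prox

theorem LipschitzWith.norm_hasDerivWithinAt_comp_le {E F : Type*} [NormedAddCommGroup E]
    [NormedSpace ℝ E] [NormedAddCommGroup F] [NormedSpace ℝ F] {T : E → F} {K : ℝ≥0}
    (hT : LipschitzWith K T) {x : ℝ → E} {v : E} {D : F} {t : ℝ}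
    (hx : HasDerivWithinAt x v (Ioi t) t) (hTx : HasDerivWithinAt (fun s => T (x s)) D (Ioi t) t) :
    ‖D‖ ≤ K * ‖v‖ := by
  rw [hasDerivWithinAt_iff_tendsto_slope' (s := Ioi t) (lt_irrefl t)] at hx hTx
  refine le_of_tendsto_of_tendsto hTx.norm (hx.norm.const_mul (K : ℝ))
    (Eventually.of_forall fun s => ?_)
  simp only [slope_def_module, norm_smul]
  rw [mul_left_comm]
  exact mul_le_mul_of_nonneg_left (hT.norm_sub_le _ _) (norm_nonneg _)

section Ode

variable {E : Type*} [NormedAddCommGroup E] [NormedSpace ℝ E]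

theorem IsCompact.exists_lipschitzOnWith_of_hasDerivWithinAt {s : Set ℝ} (hs : IsCompact s)
    (hconv : Convex ℝ s) {f f' : ℝ → E} (hf : ∀ t ∈ s, HasDerivWithinAt f (f' t) s t)
    (hf' : ContinuousOn f' s) : ∃ K, LipschitzOnWith K f s := by
  obtain ⟨C, hC⟩ := hs.exists_bound_of_continuousOn hf'
  exact ⟨C.toNNReal, hconv.lipschitzOnWith_of_nnnorm_hasDerivWithin_le hf fun t ht => by
    simpa using Real.toNNReal_le_toNNReal (hC t ht)⟩

theorem ae_differentiableWithinAt_Ici_of_lipschitzOnWith_Icc [FiniteDimensional ℝ E]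
    {f : ℝ → E} {a : ℝ} (h : ∀ b, ∃ K, LipschitzOnWith K f (Icc a b)) :
    ∀ᵐ t ∂volume.restrict (Ici a), DifferentiableWithinAt ℝ f (Ici a) t := by
  refine LocallyBoundedVariationOn.ae_differentiableWithinAt (fun _ d _ hd => ?_) measurableSet_Ici
  obtain ⟨K, hK⟩ := h d
  refine (hK.locallyBoundedVariationOn a d (left_mem_Icc.2 hd) (right_mem_Icc.2 hd)).mono
    fun u ⟨hu, _, hud⟩ => ⟨⟨hu, hud⟩, hu, hud⟩

variable {T : E → E} {K : ℝ≥0} {γ a : ℝ} {x x' x'' : ℝ → E}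

theorem exists_lipschitzOnWith_Icc_of_ode (hT : LipschitzWith K T)
    (hx1 : ∀ t ∈ Ici a, HasDerivWithinAt x (x' t) (Ici a) t)
    (hx2 : ∀ t ∈ Ici a, HasDerivWithinAt x' (x'' t) (Ici a) t)
    (hx2c : ContinuousOn x'' (Ici a))
    (hode : ∀ t ∈ Ici a, x'' t + γ • x' t + x t = T (x t)) (b : ℝ) :
    ∃ L, LipschitzOnWith L x'' (Icc a b) := by
  have hsub : Icc a b ⊆ Ici a := Icc_subset_Ici_self
  obtain ⟨K₀, hx⟩ := isCompact_Icc.exists_lipschitzOnWith_of_hasDerivWithinAt (convex_Icc a b)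
    (fun t ht => (hx1 t (hsub ht)).mono hsub)
    (fun t ht => (hx2 t (hsub ht)).continuousWithinAt.mono hsub)
  obtain ⟨K₁, hx'⟩ := isCompact_Icc.exists_lipschitzOnWith_of_hasDerivWithinAt (convex_Icc a b)
    (fun t ht => (hx2 t (hsub ht)).mono hsub) (hx2c.mono hsub)
  have hrhs := ((hT.comp_lipschitzOnWith hx).sub
    ((lipschitzWith_smul γ).comp_lipschitzOnWith hx')).sub hx
  have heq : ∀ t ∈ Icc a b, x'' t = T (x t) - γ • x' t - x t := fun t ht => by
    rw [← hode t (hsub ht)]; abel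
  refine ⟨K * K₀ + ‖γ‖₊ * K₁ + K₀, fun s hs t ht => ?_⟩
  rw [heq s hs, heq t ht]
  exact hrhs hs ht

theorem norm_hasDerivWithinAt_le_of_ode (hT : LipschitzWith K T)
    (hx1 : ∀ t ∈ Ici a, HasDerivWithinAt x (x' t) (Ici a) t)
    (hx2 : ∀ t ∈ Ici a, HasDerivWithinAt x' (x'' t) (Ici a) t)
    (hode : ∀ t ∈ Ici a, x'' t + γ • x' t + x t = T (x t)) {t : ℝ} (ht : t ∈ Ici a) {x''' : E}
    (hx3 : HasDerivWithinAt x'' x''' (Ici a) t) :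
    ‖x'''‖ ≤ (K + 1) * ‖x' t‖ + |γ| * ‖x'' t‖ := by
  have hIoi : Ioi t ⊆ Ici a := Ioi_subset_Ici ht
  set D := x''' + γ • x'' t + x' t with hDdef
  have hTx : HasDerivWithinAt (fun s => T (x s)) D (Ioi t) t :=
    ((hx3.add ((hx2 t ht).const_smul γ)).add (hx1 t ht)).mono hIoi |>.congr
      (fun s hs => (hode s (hIoi hs)).symm) (hode t ht).symm
  have hD := hT.norm_hasDerivWithinAt_comp_le ((hx1 t ht).mono hIoi) hTx
  calc ‖x'''‖ = ‖D - γ • x'' t - x' t‖ := by rw [hDdef]; abel_nf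
    _ ≤ ‖D - γ • x'' t‖ + ‖x' t‖ := norm_sub_le _ _
    _ ≤ ‖D‖ + ‖γ • x'' t‖ + ‖x' t‖ := by gcongr; exact norm_sub_le _ _
    _ ≤ (K + 1) * ‖x' t‖ + |γ| * ‖x'' t‖ := by
      rw [norm_smul, Real.norm_eq_abs]; linarith

end Ode

section Constants

variable {γ lam β : ℝ}

theorem sq_le_Lone_sq (hγ : 0 ≤ γ) (a b : ℝ) :
    ((2 + lam * β) * a + γ * b) ^ 2
      ≤ Lone γ lam β ^ 2 * a ^ 2 + (Lone γ lam β ^ 2 - 1) * b ^ 2 := by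
  rw [Lone, Real.sq_sqrt (le_max_of_le_left (sq_nonneg _))]
  -- Cauchy–Schwarz for `(1 + λβ) a + a + γ b` with weights `(1, 1, γ)`
  have hcs : ((2 + lam * β) * a + γ * b) ^ 2
      ≤ (γ + 2) * ((1 + lam * β) ^ 2 + 1) * a ^ 2 + γ * (γ + 2) * b ^ 2 := by
    nlinarith [sq_nonneg (lam * β * a), mul_nonneg hγ (sq_nonneg ((1 + lam * β) * a - b)),
      mul_nonneg hγ (sq_nonneg (a - b))]
  nlinarith [le_max_left ((γ + 1) ^ 2) ((γ + 2) * ((1 + lam * β) ^ 2 + 1)),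
    le_max_right ((γ + 1) ^ 2) ((γ + 2) * ((1 + lam * β) ^ 2 + 1)), sq_nonneg a, sq_nonneg b]

theorem sq_le_Ltwo_sq (hγ : 0 ≤ γ) (hc : 0 ≤ lam * β) (a b : ℝ) :
    ((2 + lam * β) * a + γ * b) ^ 2
      ≤ Ltwo γ lam β ^ 2 * a ^ 2 + (Ltwo γ lam β ^ 2 - 1) * b ^ 2 := by
  rw [Ltwo, Real.sq_sqrt (le_max_of_le_right (by positivity))]
  -- Cauchy–Schwarz for `(2 + λβ) a + γ b` with weights `(2 + λβ, γ)`
  have hcs : ((2 + lam * β) * a + γ * b) ^ 2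
      ≤ (2 + lam * β) * (2 + lam * β + γ) * a ^ 2 + γ * (2 + lam * β + γ) * b ^ 2 := by
    nlinarith [mul_nonneg (mul_nonneg (by linarith : (0:ℝ) ≤ 2 + lam * β) hγ) (sq_nonneg (a - b))]
  nlinarith [le_max_left ((γ + 1) ^ 2 + γ * lam * β) ((2 + lam * β) ^ 2 + γ * (2 + lam * β)),
    le_max_right ((γ + 1) ^ 2 + γ * lam * β) ((2 + lam * β) ^ 2 + γ * (2 + lam * β)),
    sq_nonneg a, sq_nonneg b]

theorem sq_le_LL_sq (hγ : 0 ≤ γ) (hc : 0 ≤ lam * β) (a b : ℝ) :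
    ((2 + lam * β) * a + γ * b) ^ 2 ≤ LL γ lam β ^ 2 * a ^ 2 + (LL γ lam β ^ 2 - 1) * b ^ 2 := by
  rcases min_choice (Lone γ lam β) (Ltwo γ lam β) with h | h <;> rw [LL, h]
  · exact sq_le_Lone_sq hγ a b
  · exact sq_le_Ltwo_sq hγ hc a b

end Constants

theorem stmt_5_general (n : ℕ) (β lam γ : ℝ)
    (hβ : 0 ≤ β) (hlam : 0 < lam) (hγ : 0 < γ)
    (f : EuclideanSpace ℝ (Fin n) → EReal)
    (hproper : (∃ z, f z ≠ ⊤) ∧ (∀ z, f z ≠ ⊥))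
    (hconv : ∀ x y : EuclideanSpace ℝ (Fin n), ∀ t : ℝ, 0 ≤ t → t ≤ 1 →
      f (t • x + (1 - t) • y) ≤ (t : EReal) * f x + ((1 - t : ℝ) : EReal) * f y)
    (g' : EuclideanSpace ℝ (Fin n) → EuclideanSpace ℝ (Fin n))
    (hglip : ∀ u v, ‖g' u - g' v‖ ≤ β * ‖u - v‖)
    (prox : EuclideanSpace ℝ (Fin n) → EuclideanSpace ℝ (Fin n))
    (hprox : ∀ z y, f (prox z) + (((1/(2*lam)) * ‖prox z - z‖^2 : ℝ) : EReal)
      ≤ f y + (((1/(2*lam)) * ‖y - z‖^2 : ℝ) : EReal))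
    (x x' x'' : ℝ → EuclideanSpace ℝ (Fin n))
    (hx1 : ∀ t ∈ Ici (0:ℝ), HasDerivWithinAt x (x' t) (Ici 0) t)
    (hx2 : ∀ t ∈ Ici (0:ℝ), HasDerivWithinAt x' (x'' t) (Ici 0) t)
    (hx2c : ContinuousOn x'' (Ici 0))
    (hode : ∀ t ∈ Ici (0:ℝ), x'' t + γ • x' t + x t = prox (x t - lam • g' (x t)))
    :
    (∀ T : ℝ, 0 ≤ T → ∃ K : NNReal, LipschitzOnWith K x'' (Icc 0 T)) ∧
    ∃ x3 : ℝ → EuclideanSpace ℝ (Fin n),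
      ∀ᵐ t ∂(volume.restrict (Ici (0:ℝ))),
        HasDerivWithinAt x'' (x3 t) (Ici 0) t ∧
        ‖x3 t‖^2 ≤ (LL γ lam β)^2 * ‖x' t‖^2 + ((LL γ lam β)^2 - 1) * ‖x'' t‖^2 := by
  have hg' : LipschitzWith β.toNNReal g' :=
    LipschitzWith.of_dist_le' fun u v => by simpa only [dist_eq_norm] using hglip u v
  have hT : LipschitzWith (1 * (1 + ‖lam‖₊ * β.toNNReal)) fun u => prox (u - lam • g' u) :=
    (lipschitzWith_one_prox hlam hproper.1 hproper.2 hconv hprox).comp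
      (LipschitzWith.id.sub ((lipschitzWith_smul lam).comp hg'))
  have hK : ((1 * (1 + ‖lam‖₊ * β.toNNReal) : ℝ≥0) : ℝ) + 1 = 2 + lam * β := by
    simp only [one_mul, NNReal.coe_add, NNReal.coe_one, NNReal.coe_mul, coe_nnnorm,
      Real.norm_eq_abs, abs_of_pos hlam, Real.coe_toNNReal _ hβ]
    ring
  have hlip := exists_lipschitzOnWith_Icc_of_ode hT hx1 hx2 hx2c hode
  refine ⟨fun b _ => hlip b, fun t => derivWithin x'' (Ici 0) t, ?_⟩
  filter_upwards [ae_differentiableWithinAt_Ici_of_lipschitzOnWith_Icc hlip,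
    ae_restrict_mem measurableSet_Ici] with t hdiff ht
  refine ⟨hdiff.hasDerivWithinAt, ?_⟩
  have hbound := norm_hasDerivWithinAt_le_of_ode hT hx1 hx2 hode ht hdiff.hasDerivWithinAt
  rw [hK, abs_of_pos hγ] at hbound
  calc _ ≤ ((2 + lam * β) * ‖x' t‖ + γ * ‖x'' t‖) ^ 2 := by gcongr
    _ ≤ _ := sq_le_LL_sq hγ.le (mul_nonneg hlam.le hβ) _ _

theorem stmt_5 (n : ℕ) (hn : 1 ≤ n) (β lam γ : ℝ)
    (hβ : 0 ≤ β) (hlam : 0 < lam) (hγ : 0 < γ)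
    (f : EuclideanSpace ℝ (Fin n) → EReal)
    (hproper : (∃ z, f z ≠ ⊤) ∧ (∀ z, f z ≠ ⊥))
    (hconv : ∀ x y : EuclideanSpace ℝ (Fin n), ∀ t : ℝ, 0 ≤ t → t ≤ 1 →
      f (t • x + (1 - t) • y) ≤ (t : EReal) * f x + ((1 - t : ℝ) : EReal) * f y)
    (hlsc : LowerSemicontinuous f)
    (g : EuclideanSpace ℝ (Fin n) → ℝ)
    (g' : EuclideanSpace ℝ (Fin n) → EuclideanSpace ℝ (Fin n))
    (hg : ∀ u, HasGradientAt g (g' u) u)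
    (hglip : ∀ u v, ‖g' u - g' v‖ ≤ β * ‖u - v‖)
    (prox : EuclideanSpace ℝ (Fin n) → EuclideanSpace ℝ (Fin n))
    (hprox : ∀ z y, f (prox z) + (((1/(2*lam)) * ‖prox z - z‖^2 : ℝ) : EReal)
      ≤ f y + (((1/(2*lam)) * ‖y - z‖^2 : ℝ) : EReal))
    (hproxu : ∀ z y, (∀ w, f y + (((1/(2*lam)) * ‖y - z‖^2 : ℝ) : EReal)
      ≤ f w + (((1/(2*lam)) * ‖w - z‖^2 : ℝ) : EReal)) → y = prox z)
    (x x' x'' : ℝ → EuclideanSpace ℝ (Fin n))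
    (hx1 : ∀ t ∈ Ici (0:ℝ), HasDerivWithinAt x (x' t) (Ici 0) t)
    (hx2 : ∀ t ∈ Ici (0:ℝ), HasDerivWithinAt x' (x'' t) (Ici 0) t)
    (hx2c : ContinuousOn x'' (Ici 0))
    (hode : ∀ t ∈ Ici (0:ℝ), x'' t + γ • x' t + x t = prox (x t - lam • g' (x t)))
    :
    (∀ T : ℝ, 0 ≤ T → ∃ K : NNReal, LipschitzOnWith K x'' (Icc 0 T)) ∧
    ∃ x3 : ℝ → EuclideanSpace ℝ (Fin n),
      ∀ᵐ t ∂(volume.restrict (Ici (0:ℝ))),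
        HasDerivWithinAt x'' (x3 t) (Ici 0) t ∧
        ‖x3 t‖^2 ≤ (LL γ lam β)^2 * ‖x' t‖^2 + ((LL γ lam β)^2 - 1) * ‖x'' t‖^2 :=
  stmt_5_general n β lam γ hβ hlam hγ f hproper hconv g' hglip prox hprox x x' x'' hx1 hx2 hx2c hode
end

section
/- Let γ, λ > 0 and β ≥ 0 be real numbers with γλβ ≤ 1/3. Then C < 0 and B > A, where L₁ := √(max{(γ+1)², (γ+2)((1+λβ)²+1)}), L₂ := √(max{(γ+1)² + γλβ, (2+λβ)² + γ(2+λβ)}), L := min{L₁, L₂}, A := −γ/(2λ) + (β/2)(L²+2γ²+1), B := −γ/(2λL²) + (β/2)(L²+γ²+1) and C := −(2L²+1)γ²/(L²+1)² + 3βγλ − 1. -/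
open Set Filter Topology MeasureTheory

section

variable {γ lam β : ℝ}

theorem two_le_Lone (hγ : 0 ≤ γ) (hlamβ : 0 ≤ lam * β) : 2 ≤ Lone γ lam β := by
  refine Real.le_sqrt_of_sq_le (le_max_of_le_right ?_)
  nlinarith [sq_nonneg (1 + lam * β)]

theorem two_le_Ltwo (hγ : 0 ≤ γ) (hlamβ : 0 ≤ lam * β) : 2 ≤ Ltwo γ lam β := by
  refine Real.le_sqrt_of_sq_le (le_max_of_le_right ?_)
  nlinarith [mul_nonneg hγ hlamβ]

theorem two_le_LL (hγ : 0 ≤ γ) (hlamβ : 0 ≤ lam * β) : 2 ≤ LL γ lam β :=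
  le_min (two_le_Lone hγ hlamβ) (two_le_Ltwo hγ hlamβ)

theorem CC_neg (hγ : γ ≠ 0) (h : 3 * β * γ * lam ≤ 1) : CC γ lam β < 0 := by
  have : 0 < (2 * LL γ lam β ^ 2 + 1) / (LL γ lam β ^ 2 + 1) ^ 2 * γ ^ 2 := by positivity
  rw [CC]
  linarith

theorem BB_sub_AA (hlam : lam ≠ 0) :
    BB γ lam β - AA γ lam β = γ / (2 * lam) * (1 - 1 / LL γ lam β ^ 2 - γ * lam * β) := by
  rw [AA, BB]
  field_simp
  ring

theorem AA_lt_BB_iff (hγ : 0 < γ) (hlam : 0 < lam) :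
    AA γ lam β < BB γ lam β ↔ γ * lam * β < 1 - 1 / LL γ lam β ^ 2 := by
  rw [← sub_pos, BB_sub_AA hlam.ne', mul_pos_iff_of_pos_left (by positivity), sub_pos]

end

theorem stmt_9 (γ lam β : ℝ) (hγ : 0 < γ) (hlam : 0 < lam) (hβ : 0 ≤ β)
    (h13 : γ * lam * β ≤ 1/3) :
    CC γ lam β < 0 ∧ AA γ lam β < BB γ lam β := by
  refine ⟨CC_neg hγ.ne' (by linarith), (AA_lt_BB_iff hγ hlam).2 ?_⟩
  have hL : 2 ≤ LL γ lam β := two_le_LL hγ.le (mul_nonneg hlam.le hβ)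
  have : 1 / LL γ lam β ^ 2 ≤ 1 / 2 ^ 2 := one_div_le_one_div_of_le (by norm_num) (by gcongr)
  linarith
end

section
/- Assume that f+g is bounded from below and that γ, λ satisfy condition (ρ). Let x : [0,+∞) → ℝⁿ be the unique twice continuously differentiable global solution of the dynamical system (2). Then for every t ∈ [0,+∞) and every a ≥ 0, the vector w(t) := (−∇g(x(t)) + ∇g(ẍ(t)+γẋ(t)+x(t)) − (aγ/λ)ẋ(t), −(1/λ)(ẍ(t)+(1−a)γẋ(t)), −(C/λ)ẋ(t)) belongs to S(ẍ(t)+γẋ(t)+x(t), aγẋ(t)+x(t), ẋ(t)); equivalently, −(1/λ)ẍ(t) − (γ/λ)ẋ(t) − ∇g(x(t)) ∈ ∂f(ẍ(t)+γẋ(t)+x(t)). Moreover ‖w(t)‖ ≤ (β + 1/λ)‖ẍ(t)‖ + ((βλγ + (2a+1)γ − C)/λ)‖ẋ(t)‖. -/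
open Set Filter Topology MeasureTheory

/-! The ODE says that `u = ẍ + γẋ + x` is the proximal point of `x - λ∇g(x)`. The first-order
optimality condition of the proximal problem, obtained by comparing `u` with the points of a
segment `u + τ(w - u)` and letting `τ → 0⁺` (this is where convexity of `f` enters), says that
`(1/λ)(x - λ∇g(x) - u) = -(1/λ)ẍ - (γ/λ)ẋ - ∇g(x)` is a subgradient of `f` at `u`. Taking it as the
subgradient `p` in the definition of `S` gives the membership by a linear identity, and the
norm bound follows from the triangle inequality, `‖(a,b,c)‖ ≤ ‖a‖ + ‖b‖ + ‖c‖`, the Lipschitz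
bound `‖∇g(u) - ∇g(x)‖ ≤ β‖ẍ + γẋ‖` and `C < 0`. -/

lemma le_of_forall_le_add_mul {a b c : ℝ} (h : ∀ t : ℝ, 0 < t → t ≤ 1 → a ≤ b + t * c) :
    a ≤ b := by
  have hlim : Tendsto (fun t : ℝ => b + t * c) (𝓝[>] 0) (𝓝 b) := by
    have : Tendsto (fun t : ℝ => b + t * c) (𝓝 0) (𝓝 (b + 0 * c)) :=
      tendsto_const_nhds.add (tendsto_id.mul_const c)
    simpa using this.mono_left nhdsWithin_le_nhds
  exact ge_of_tendsto hlim (eventually_of_mem (Ioc_mem_nhdsGT one_pos) fun t ht => h t ht.1 ht.2)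

section InnerProductSpace

variable {E : Type*} [NormedAddCommGroup E] [InnerProductSpace ℝ E]

lemma norm_add_smul_le (p q : E) (c : ℝ) : ‖p + c • q‖ ≤ ‖p‖ + |c| * ‖q‖ := by
  simpa [norm_smul] using norm_add_le p (c • q)

lemma norm_lineMap_sub_sq (w y z : E) (t : ℝ) :
    ‖t • w + (1 - t) • y - z‖ ^ 2
      = ‖y - z‖ ^ 2 - 2 * t * inner ℝ (z - y) (w - y) + t ^ 2 * ‖w - y‖ ^ 2 := by
  have hseg : t • w + (1 - t) • y - z = (y - z) + t • (w - y) := by module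
  have hflip : y - z = -(z - y) := by module
  rw [hseg, norm_add_sq_real, real_inner_smul_right, norm_smul, Real.norm_eq_abs, mul_pow,
    sq_abs, hflip, inner_neg_left, norm_neg]
  ring

theorem prox_subgradient_inequality {f : E → EReal}
    (hproper : (∃ z, f z ≠ ⊤) ∧ (∀ z, f z ≠ ⊥))
    (hconv : ∀ x y : E, ∀ t : ℝ, 0 ≤ t → t ≤ 1 →
      f (t • x + (1 - t) • y) ≤ (t : EReal) * f x + ((1 - t : ℝ) : EReal) * f y)
    {lam : ℝ} {z y : E}
    (hy : ∀ w, f y + (((1/(2*lam)) * ‖y - z‖^2 : ℝ) : EReal)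
      ≤ f w + (((1/(2*lam)) * ‖w - z‖^2 : ℝ) : EReal)) (w : E) :
    f y + ((inner ℝ ((1/lam) • (z - y)) (w - y) : ℝ) : EReal) ≤ f w := by
  obtain ⟨⟨z₀, hz₀⟩, hbot⟩ := hproper
  have hytop : f y ≠ ⊤ := by
    intro h
    have h₀ := hy z₀
    rw [h, EReal.top_add_coe, top_le_iff] at h₀
    exact EReal.add_ne_top hz₀ (EReal.coe_ne_top _) h₀
  rcases eq_or_ne (f w) ⊤ with hwtop | hwtop
  · rw [hwtop]; exact le_top
  obtain ⟨fy, hfy⟩ : ∃ fy : ℝ, f y = fy := ⟨_, (EReal.coe_toReal hytop (hbot y)).symm⟩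
  obtain ⟨fw, hfw⟩ : ∃ fw : ℝ, f w = fw := ⟨_, (EReal.coe_toReal hwtop (hbot w)).symm⟩
  set s : ℝ := 1/(2*lam)
  set I : ℝ := inner ℝ (z - y) (w - y)
  set N : ℝ := ‖w - y‖ ^ 2
  have hsegment : ∀ t : ℝ, 0 < t → t ≤ 1 → fy + 2 * s * I ≤ fw + t * (s * N) := by
    intro t ht ht1
    have hcmp := (hy (t • w + (1 - t) • y)).trans (add_le_add_left (hconv w y t ht.le ht1) _)
    rw [hfy, hfw, ← EReal.coe_mul, ← EReal.coe_mul, ← EReal.coe_add, ← EReal.coe_add,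
      ← EReal.coe_add, EReal.coe_le_coe_iff, norm_lineMap_sub_sq] at hcmp
    have hscaled : t * (fy + 2 * s * I) ≤ t * (fw + t * (s * N)) := by nlinarith
    exact le_of_mul_le_mul_left hscaled ht
  have hinner : inner ℝ ((1/lam) • (z - y)) (w - y) = 2 * s * I := by
    rw [real_inner_smul_left]; ring
  rw [hfy, hfw, hinner, ← EReal.coe_add, EReal.coe_le_coe_iff]
  exact le_of_forall_le_add_mul hsegment

end InnerProductSpace

lemma e3_le_norm_add_norm_add_norm {n : ℕ} (p q r : EuclideanSpace ℝ (Fin n)) :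
    e3 (p, q, r) ≤ ‖p‖ + ‖q‖ + ‖r‖ := by
  rw [e3, Real.sqrt_le_left (by positivity)]
  nlinarith [norm_nonneg p, norm_nonneg q, norm_nonneg r]

lemma e3_subgradient_le {n : ℕ} {g' : EuclideanSpace ℝ (Fin n) → EuclideanSpace ℝ (Fin n)}
    {β lam γ C a : ℝ} (hglip : ∀ u v, ‖g' u - g' v‖ ≤ β * ‖u - v‖) (hβ : 0 ≤ β)
    (hlam : 0 < lam) (hγ : 0 < γ) (hC : C < 0) (ha : 0 ≤ a)
    (p v acc : EuclideanSpace ℝ (Fin n)) :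
    e3 (-g' p + g' (acc + γ • v + p) - ((a * γ/lam) • v),
        -((1/lam) • (acc + ((1 - a) * γ) • v)),
        -((C/lam) • v))
      ≤ (β + 1/lam) * ‖acc‖ + ((β * lam * γ + (2 * a + 1) * γ - C)/lam) * ‖v‖ := by
  have hgrad : ‖-g' p + g' (acc + γ • v + p) - ((a * γ/lam) • v)‖
      ≤ β * (‖acc‖ + γ * ‖v‖) + (a * γ/lam) * ‖v‖ := by
    have hlip : ‖g' (acc + γ • v + p) - g' p‖ ≤ β * (‖acc‖ + γ * ‖v‖) := by
      refine (hglip _ _).trans (mul_le_mul_of_nonneg_left ?_ hβ)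
      simpa [abs_of_pos hγ] using norm_add_smul_le acc v γ
    calc ‖-g' p + g' (acc + γ • v + p) - ((a * γ/lam) • v)‖
        ≤ ‖g' (acc + γ • v + p) - g' p‖ + ‖(a * γ/lam) • v‖ := by
          rw [neg_add_eq_sub]; exact norm_sub_le _ _
      _ ≤ β * (‖acc‖ + γ * ‖v‖) + (a * γ/lam) * ‖v‖ := by
          rw [norm_smul, Real.norm_of_nonneg (by positivity)]; linarith
  have hgap : ‖-((1/lam) • (acc + ((1 - a) * γ) • v))‖
      ≤ (1/lam) * (‖acc‖ + (1 + a) * γ * ‖v‖) := by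
    rw [norm_neg, norm_smul, Real.norm_of_nonneg (by positivity)]
    have habs : |(1 - a) * γ| ≤ (1 + a) * γ := by
      rw [abs_mul, abs_of_pos hγ]
      exact mul_le_mul_of_nonneg_right (abs_le.mpr ⟨by linarith, by linarith⟩) hγ.le
    have := norm_add_smul_le acc v ((1 - a) * γ)
    gcongr
    nlinarith [norm_nonneg v]
  have hmom : ‖-((C/lam) • v)‖ = (-C/lam) * ‖v‖ := by
    rw [norm_neg, norm_smul, Real.norm_eq_abs, abs_of_neg (div_neg_of_neg_of_pos hC hlam), neg_div]
  refine (e3_le_norm_add_norm_add_norm _ _ _).trans ?_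
  have hsum : β * (‖acc‖ + γ * ‖v‖) + (a * γ/lam) * ‖v‖ + (1/lam) * (‖acc‖ + (1 + a) * γ * ‖v‖)
      + (-C/lam) * ‖v‖
      = (β + 1/lam) * ‖acc‖ + ((β * lam * γ + (2 * a + 1) * γ - C)/lam) * ‖v‖ := by
    field_simp; ring
  linarith

theorem stmt_13_general (n : ℕ) (β lam γ : ℝ)
    (hβ : 0 ≤ β) (hlam : 0 < lam) (hγ : 0 < γ)
    (f : EuclideanSpace ℝ (Fin n) → EReal)
    (hproper : (∃ z, f z ≠ ⊤) ∧ (∀ z, f z ≠ ⊥))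
    (hconv : ∀ x y : EuclideanSpace ℝ (Fin n), ∀ t : ℝ, 0 ≤ t → t ≤ 1 →
      f (t • x + (1 - t) • y) ≤ (t : EReal) * f x + ((1 - t : ℝ) : EReal) * f y)
    (g' : EuclideanSpace ℝ (Fin n) → EuclideanSpace ℝ (Fin n))
    (hglip : ∀ u v, ‖g' u - g' v‖ ≤ β * ‖u - v‖)
    (prox : EuclideanSpace ℝ (Fin n) → EuclideanSpace ℝ (Fin n))
    (hprox : ∀ z y, f (prox z) + (((1/(2*lam)) * ‖prox z - z‖^2 : ℝ) : EReal)
      ≤ f y + (((1/(2*lam)) * ‖y - z‖^2 : ℝ) : EReal))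
    (x x' x'' : ℝ → EuclideanSpace ℝ (Fin n))
    (hode : ∀ t ∈ Ici (0:ℝ), x'' t + γ • x' t + x t = prox (x t - lam • g' (x t)))
    (hρC : CC γ lam β < 0)
    :
    ∀ t ∈ Ici (0:ℝ), ∀ a : ℝ, 0 ≤ a →
      ((-((1/lam) • x'' t) - ((γ/lam) • x' t) - g' (x t))
          ∈ subdiff f (x'' t + γ • x' t + x t)) ∧
      ((-g' (x t) + g' (x'' t + γ • x' t + x t) - ((a * γ/lam) • x' t),
          -((1/lam) • (x'' t + ((1 - a) * γ) • x' t)),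
          -((CC γ lam β/lam) • x' t))
        ∈ Sset f g' lam (CC γ lam β)
            (x'' t + γ • x' t + x t) ((a * γ) • x' t + x t) (x' t)) ∧
      e3 (-g' (x t) + g' (x'' t + γ • x' t + x t) - ((a * γ/lam) • x' t),
          -((1/lam) • (x'' t + ((1 - a) * γ) • x' t)),
          -((CC γ lam β/lam) • x' t))
        ≤ (β + 1/lam) * ‖x'' t‖
          + ((β * lam * γ + (2 * a + 1) * γ - CC γ lam β)/lam) * ‖x' t‖ := by
  intro t ht a ha
  have hsub : -((1/lam) • x'' t) - ((γ/lam) • x' t) - g' (x t)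
      ∈ subdiff f (x'' t + γ • x' t + x t) := by
    have hres : (1/lam) • ((x t - lam • g' (x t)) - (x'' t + γ • x' t + x t))
        = -((1/lam) • x'' t) - ((γ/lam) • x' t) - g' (x t) := by
      match_scalars
      all_goals field_simp
      ring
    rw [← hres]
    exact prox_subgradient_inequality hproper hconv (hode t ht ▸ hprox _)
  refine ⟨hsub, ⟨_, hsub, ?_⟩, e3_subgradient_le hglip hβ hlam hγ hρC ha _ _ _⟩
  rw [Prod.mk.injEq, Prod.mk.injEq]
  refine ⟨?_, ?_, rfl⟩ <;> match_scalars <;> field_simp <;> ring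

theorem stmt_13 (n : ℕ) (hn : 1 ≤ n) (β lam γ : ℝ)
    (hβ : 0 ≤ β) (hlam : 0 < lam) (hγ : 0 < γ)
    (f : EuclideanSpace ℝ (Fin n) → EReal)
    (hproper : (∃ z, f z ≠ ⊤) ∧ (∀ z, f z ≠ ⊥))
    (hconv : ∀ x y : EuclideanSpace ℝ (Fin n), ∀ t : ℝ, 0 ≤ t → t ≤ 1 →
      f (t • x + (1 - t) • y) ≤ (t : EReal) * f x + ((1 - t : ℝ) : EReal) * f y)
    (hlsc : LowerSemicontinuous f)
    (g : EuclideanSpace ℝ (Fin n) → ℝ)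
    (g' : EuclideanSpace ℝ (Fin n) → EuclideanSpace ℝ (Fin n))
    (hg : ∀ u, HasGradientAt g (g' u) u)
    (hglip : ∀ u v, ‖g' u - g' v‖ ≤ β * ‖u - v‖)
    (prox : EuclideanSpace ℝ (Fin n) → EuclideanSpace ℝ (Fin n))
    (hprox : ∀ z y, f (prox z) + (((1/(2*lam)) * ‖prox z - z‖^2 : ℝ) : EReal)
      ≤ f y + (((1/(2*lam)) * ‖y - z‖^2 : ℝ) : EReal))
    (hproxu : ∀ z y, (∀ w, f y + (((1/(2*lam)) * ‖y - z‖^2 : ℝ) : EReal)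
      ≤ f w + (((1/(2*lam)) * ‖w - z‖^2 : ℝ) : EReal)) → y = prox z)
    (x x' x'' : ℝ → EuclideanSpace ℝ (Fin n))
    (hx1 : ∀ t ∈ Ici (0:ℝ), HasDerivWithinAt x (x' t) (Ici 0) t)
    (hx2 : ∀ t ∈ Ici (0:ℝ), HasDerivWithinAt x' (x'' t) (Ici 0) t)
    (hx2c : ContinuousOn x'' (Ici 0))
    (hode : ∀ t ∈ Ici (0:ℝ), x'' t + γ • x' t + x t = prox (x t - lam • g' (x t)))
    (hbdd : ∃ m : ℝ, ∀ z, (m : EReal) ≤ f z + (g z : EReal))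
    (hρA : AA γ lam β < 0) (hρB : BB γ lam β < 0) (hρC : CC γ lam β < 0)
    :
    ∀ t ∈ Ici (0:ℝ), ∀ a : ℝ, 0 ≤ a →
      ((-((1/lam) • x'' t) - ((γ/lam) • x' t) - g' (x t))
          ∈ subdiff f (x'' t + γ • x' t + x t)) ∧
      ((-g' (x t) + g' (x'' t + γ • x' t + x t) - ((a * γ/lam) • x' t),
          -((1/lam) • (x'' t + ((1 - a) * γ) • x' t)),
          -((CC γ lam β/lam) • x' t))
        ∈ Sset f g' lam (CC γ lam β)
            (x'' t + γ • x' t + x t) ((a * γ) • x' t + x t) (x' t)) ∧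
      e3 (-g' (x t) + g' (x'' t + γ • x' t + x t) - ((a * γ/lam) • x' t),
          -((1/lam) • (x'' t + ((1 - a) * γ) • x' t)),
          -((CC γ lam β/lam) • x' t))
        ≤ (β + 1/lam) * ‖x'' t‖
          + ((β * lam * γ + (2 * a + 1) * γ - CC γ lam β)/lam) * ‖x' t‖ :=
  stmt_13_general n β lam γ hβ hlam hγ f hproper hconv g' hglip prox hprox x x' x'' hode hρC
end
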